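/- Let (Ω, 𝔉, P) be a probability space, (τ_N) positive with τ_N → 0, η̃ > 0, q : S → ℝ bounded, b, c : S → ℝ with inf_{s ∈ S}(c(s) − b(s)) > 0, and μ̂_N : Ω → (S → ℝ) arbitrary maps; write G_N(ω, s) = (μ̂_N(ω, s) − μ(s))/(τ_N·σ(s)). Assume: (i) there exist K > 0 and maps Z_N : Ω → (S → ℝ) such that for every ω, every N and every s with |μ(s) − c(s)| > η̃: (μ̂_N(ω, s) − c(s))·sgn(μ(s) − c(s)) ≥ σ(s)·(K + Z_N(ω, s)), and for every ε > 0 there is M > 0 with liminf_N P_*({ω : Z_N(ω, s)/τ_N ≥ −M for all s ∈ S}) ≥ 1 − ε; (ii) for every ε > 0 there is M > 0 with liminf_N P_*({ω : G_N(ω, s) ≤ M for all s with |μ(s) − c(s)| ≤ η̃}) ≥ 1 − ε. Then: (1) lim_N P_*({ω : {s : μ̂_N(ω, s) > c(s) + q(s)·τ_N·σ(s)} ⊆ {s : μ(s) > b(s)}}) = 1. (2) If moreover there exists s ∈ S with b(s) ≤ μ(s) < c(s), and for every s ∈ S₀ := {s : b(s) ≤ μ(s) < c(s) and |μ(s) −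 c(s)| ≤ η̃} the sequence of maps ω ↦ G_N(ω, s) satisfies: for every ε > 0 there is M > 0 with liminf_N P_*({ω : G_N(ω, s) ≤ M}) ≥ 1 − ε, then limsup_N P*({ω : {s : μ̂_N(ω, s) < c(s) − q(s)·τ_N·σ(s)} ⊆ {s : μ(s) < b(s)}}) = 0. (Paper: Lemma lem:CoPEContainLemma, first case.) -/
import Mathlib

open MeasureTheory Filter

/-- Outer probability of an arbitrary (not necessarily measurable) set. -/
noncomputable def outerProb {Ω : Type*} [MeasurableSpace Ω] (P : Measure Ω) (A : Set Ω) : ℝ :=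
  (P A).toReal

/-- Inner probability of an arbitrary (not necessarily measurable) set. -/
noncomputable def innerProb {Ω : Type*} [MeasurableSpace Ω] (P : Measure Ω) (A : Set Ω) : ℝ :=
  1 - (P Aᶜ).toReal

section helpers

variable {Ω : Type*} [MeasurableSpace Ω] (P : Measure Ω) [IsProbabilityMeasure P]

lemma innerProb_nonneg (A : Set Ω) : 0 ≤ innerProb P A := by
  unfold innerProb
  have h : (P Aᶜ).toReal ≤ (1 : ENNReal).toReal :=
    ENNReal.toReal_mono ENNReal.one_ne_top prob_le_one
  simp at h; linarith

omit [IsProbabilityMeasure P] in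
lemma innerProb_le_one (A : Set Ω) : innerProb P A ≤ 1 := by
  unfold innerProb
  have := ENNReal.toReal_nonneg (a := P Aᶜ)
  linarith

lemma innerProb_mono {A B : Set Ω} (h : A ⊆ B) : innerProb P A ≤ innerProb P B := by
  unfold innerProb
  have h1 : P Bᶜ ≤ P Aᶜ := measure_mono (Set.compl_subset_compl.mpr h)
  have h2 := ENNReal.toReal_mono (measure_ne_top _ _) h1
  linarith

lemma innerProb_inter (A B : Set Ω) :
    innerProb P A + innerProb P B - 1 ≤ innerProb P (A ∩ B) := by
  unfold innerProb
  have h1 : P (A ∩ B)ᶜ ≤ P Aᶜ + P Bᶜ := by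
    rw [Set.compl_inter]; exact measure_union_le _ _
  have h2 : (P (A ∩ B)ᶜ).toReal ≤ (P Aᶜ).toReal + (P Bᶜ).toReal := by
    rw [← ENNReal.toReal_add (measure_ne_top _ _) (measure_ne_top _ _)]
    exact ENNReal.toReal_mono (by finiteness) h1
  linarith

lemma outerProb_mono {A B : Set Ω} (h : A ⊆ B) : outerProb P A ≤ outerProb P B :=
  ENNReal.toReal_mono (measure_ne_top _ _) (measure_mono h)

omit [IsProbabilityMeasure P] in
lemma outerProb_compl (A : Set Ω) : outerProb P Aᶜ = 1 - innerProb P A := by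
  unfold outerProb innerProb; ring

end helpers

/-- Lemma lem:CoPEContainLemma, first case. -/
theorem cope_contain_lemma
    {Ω : Type*} [MeasurableSpace Ω] (P : Measure Ω) [IsProbabilityMeasure P]
    {S : Type*} [MetricSpace S]
    (μ σ : S → ℝ) (o O : ℝ)
    (ho : 0 < o) (hσo : ∀ s, o ≤ σ s) (hσO : ∀ s, σ s ≤ O)
    (hμbd : ∃ M, ∀ s, |μ s| ≤ M)
    (τ : ℕ → ℝ) (hτpos : ∀ N, 0 < τ N) (hτ0 : Tendsto τ atTop (nhds 0))
    (ηt : ℝ) (hηt : 0 < ηt)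
    (q : S → ℝ) (hq : ∃ M, ∀ s, |q s| ≤ M)
    (b c : S → ℝ) (hgap : ∃ δ > (0 : ℝ), ∀ s, b s + δ ≤ c s)
    (μhat : ℕ → Ω → S → ℝ)
    (hfar : ∃ K > (0 : ℝ), ∃ Z : ℕ → Ω → S → ℝ,
      (∀ ω N, ∀ s, ηt < |μ s - c s| →
        (μhat N ω s - c s) * Real.sign (μ s - c s) ≥ σ s * (K + Z N ω s)) ∧
      (∀ ε > (0 : ℝ), ∃ M > (0 : ℝ), (1 : ℝ) - ε ≤
        liminf (fun N => innerProb P {ω : Ω | ∀ s, Z N ω s / τ N ≥ -M}) atTop))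
    (htight : ∀ ε > (0 : ℝ), ∃ M > (0 : ℝ), (1 : ℝ) - ε ≤
      liminf (fun N => innerProb P {ω : Ω |
        ∀ s, |μ s - c s| ≤ ηt → (μhat N ω s - μ s) / (τ N * σ s) ≤ M}) atTop) :
    Tendsto (fun N => innerProb P {ω : Ω |
        {s | μhat N ω s > c s + q s * τ N * σ s} ⊆ {s | μ s > b s}})
      atTop (nhds 1) ∧
    ((∃ s, b s ≤ μ s ∧ μ s < c s) →
      (∀ s, (b s ≤ μ s ∧ μ s < c s ∧ |μ s - c s| ≤ ηt) →
        ∀ ε > (0 : ℝ), ∃ M > (0 : ℝ), (1 : ℝ) - ε ≤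
          liminf (fun N => innerProb P {ω : Ω |
            (μhat N ω s - μ s) / (τ N * σ s) ≤ M}) atTop) →
      limsup (fun N => outerProb P {ω : Ω |
        {s | μhat N ω s < c s - q s * τ N * σ s} ⊆ {s | μ s < b s}}) atTop = 0) := by
  obtain ⟨Mq, hMq⟩ := hq
  obtain ⟨K, hK, Z, hfarineq, hZtight⟩ := hfar
  obtain ⟨δ, hδ, hbc⟩ := hgap
  have hτC : ∀ (C d : ℝ), 0 < d → ∀ᶠ N in atTop, τ N * C < d := by
    intro C d hd
    have h := hτ0.mul_const C
    rw [zero_mul] at h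
    exact h.eventually_lt_const hd
  have hcobdd : ∀ (g : ℕ → Set Ω),
      IsBoundedUnder (· ≥ ·) atTop (fun N => innerProb P (g N)) :=
    fun g => isBoundedUnder_of ⟨0, fun N => innerProb_nonneg P (g N)⟩
  constructor
  · -- Part 1
    rw [Metric.tendsto_atTop]
    intro ε hε
    obtain ⟨M₁, hM₁, hliminf₁⟩ := hZtight (ε/4) (by linarith)
    obtain ⟨M₂, hM₂, hliminf₂⟩ := htight (ε/4) (by linarith)
    have hev₁ : ∀ᶠ N in atTop, 1 - ε/2 <
        innerProb P {ω : Ω | ∀ s, Z N ω s / τ N ≥ -M₁} :=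
      eventually_lt_of_lt_liminf (lt_of_lt_of_le (by linarith) hliminf₁) (hcobdd _)
    have hev₂ : ∀ᶠ N in atTop, 1 - ε/2 <
        innerProb P {ω : Ω | ∀ s, |μ s - c s| ≤ ηt →
          (μhat N ω s - μ s) / (τ N * σ s) ≤ M₂} :=
      eventually_lt_of_lt_liminf (lt_of_lt_of_le (by linarith) hliminf₂) (hcobdd _)
    rw [eventually_atTop] at hev₁ hev₂
    obtain ⟨N₁, hN₁⟩ := hev₁
    obtain ⟨N₂, hN₂⟩ := hev₂
    obtain ⟨N₃, hN₃⟩ := (eventually_atTop.mp (hτC (M₁ + Mq) K hK))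
    obtain ⟨N₄, hN₄⟩ := (eventually_atTop.mp (hτC (O * (M₂ + Mq)) δ hδ))
    refine ⟨max (max N₁ N₂) (max N₃ N₄), fun N hN => ?_⟩
    have h1 := hN₁ N (le_trans (le_max_left _ _) (le_trans (le_max_left _ _) hN))
    have h2 := hN₂ N (le_trans (le_max_right _ _) (le_trans (le_max_left _ _) hN))
    have h3 := hN₃ N (le_trans (le_max_left _ _) (le_trans (le_max_right _ _) hN))
    have h4 := hN₄ N (le_trans (le_max_right _ _) (le_trans (le_max_right _ _) hN))
    set E₁ : Set Ω := {ω : Ω | ∀ s, Z N ω s / τ N ≥ -M₁} with hE₁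
    set E₂ : Set Ω := {ω : Ω | ∀ s, |μ s - c s| ≤ ηt →
      (μhat N ω s - μ s) / (τ N * σ s) ≤ M₂} with hE₂
    set A : Set Ω := {ω : Ω |
      {s | μhat N ω s > c s + q s * τ N * σ s} ⊆ {s | μ s > b s}} with hA
    have hsub : E₁ ∩ E₂ ⊆ A := by
      rintro ω ⟨hω₁, hω₂⟩ s hs
      simp only [Set.mem_setOf_eq] at hs ⊢
      by_contra hcon
      push_neg at hcon
      have hσs : 0 < σ s := lt_of_lt_of_le ho (hσo s)
      have hτN : 0 < τ N := hτpos N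
      have hmc : μ s - c s < 0 := by have := hbc s; linarith
      have hqlb : -Mq ≤ q s := neg_le_of_abs_le (hMq s)
      rcases le_or_gt |μ s - c s| ηt with hcase | hcase
      · have h5 := hω₂ s hcase
        rw [div_le_iff₀ (mul_pos hτN hσs)] at h5
        have hqσ : -Mq * (τ N * σ s) ≤ q s * (τ N * σ s) :=
          mul_le_mul_of_nonneg_right hqlb (mul_pos hτN hσs).le
        have hMq0 : (0:ℝ) ≤ Mq := le_trans (abs_nonneg _) (hMq s)
        have hσO' : (τ N * (M₂ + Mq)) * σ s ≤ (τ N * (M₂ + Mq)) * O :=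
          mul_le_mul_of_nonneg_left (hσO s) (mul_nonneg hτN.le (by linarith))
        nlinarith [hbc s, hs, h5, hqσ, hσO', h4]
      · have h5 := hfarineq ω N s hcase
        rw [Real.sign_of_neg hmc] at h5
        have h6 : -M₁ * τ N ≤ Z N ω s := by
          have h7 := hω₁ s
          rw [ge_iff_le, le_div_iff₀ hτN] at h7
          exact h7
        nlinarith [mul_le_mul_of_nonneg_left h6 hσs.le,
          mul_le_mul_of_nonneg_right hqlb (mul_pos hτN hσs).le,
          mul_le_mul_of_nonneg_left h3.le hσs.le, hs, h5]
    have hiA : innerProb P E₁ + innerProb P E₂ - 1 ≤ innerProb P A :=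
      le_trans (innerProb_inter P E₁ E₂) (innerProb_mono P hsub)
    have hle1 := innerProb_le_one P A
    rw [Real.dist_eq, abs_lt]
    constructor <;> linarith
  · -- Part 2
    rintro ⟨s₀, hb₀, hc₀⟩ hpt
    set f : ℕ → ℝ := fun N => outerProb P {ω : Ω |
      {s | μhat N ω s < c s - q s * τ N * σ s} ⊆ {s | μ s < b s}} with hf
    have hf0 : ∀ N, 0 ≤ f N := fun N => ENNReal.toReal_nonneg
    have hf1 : ∀ N, f N ≤ 1 := by
      intro N
      have h : (P {ω : Ω |
          {s | μhat N ω s < c s - q s * τ N * σ s} ⊆ {s | μ s < b s}}).toReal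
          ≤ (1 : ENNReal).toReal :=
        ENNReal.toReal_mono ENNReal.one_ne_top prob_le_one
      simpa [hf, outerProb] using h
    have hbdbelow : IsBoundedUnder (· ≥ ·) atTop f := isBoundedUnder_of ⟨0, hf0⟩
    have hcob : IsCoboundedUnder (· ≤ ·) atTop f := hbdbelow.isCoboundedUnder_le
    have hbd : IsBoundedUnder (· ≤ ·) atTop f := isBoundedUnder_of ⟨1, hf1⟩
    have hσ₀ : 0 < σ s₀ := lt_of_lt_of_le ho (hσo s₀)
    have hMq0 : (0:ℝ) ≤ Mq := le_trans (abs_nonneg _) (hMq s₀)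
    have hqub : q s₀ ≤ Mq := le_of_abs_le (hMq s₀)
    have hup : limsup f atTop ≤ 0 := by
      refine le_of_forall_pos_le_add fun ε hε => ?_
      rw [zero_add]
      rcases le_or_gt |μ s₀ - c s₀| ηt with hcase | hcase
      · obtain ⟨M, hM, hlim⟩ := hpt s₀ ⟨hb₀, hc₀, hcase⟩ (ε/2) (by linarith)
        have hev1 : ∀ᶠ N in atTop, 1 - ε <
            innerProb P {ω : Ω | (μhat N ω s₀ - μ s₀) / (τ N * σ s₀) ≤ M} :=
          eventually_lt_of_lt_liminf (lt_of_lt_of_le (by linarith) hlim) (hcobdd _)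
        have hev2 : ∀ᶠ N in atTop, τ N * (σ s₀ * (M + Mq)) < c s₀ - μ s₀ :=
          hτC _ _ (by linarith)
        refine limsup_le_of_le hcob ?_
        filter_upwards [hev1, hev2] with N h1 h2
        set B : Set Ω := {ω : Ω | (μhat N ω s₀ - μ s₀) / (τ N * σ s₀) ≤ M} with hB
        have hτN : 0 < τ N := hτpos N
        have hsub : {ω : Ω |
            {s | μhat N ω s < c s - q s * τ N * σ s} ⊆ {s | μ s < b s}} ⊆ Bᶜ := by
          intro ω hω
          simp only [Set.mem_compl_iff, hB, Set.mem_setOf_eq]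
          intro hBev
          rw [div_le_iff₀ (mul_pos hτN hσ₀)] at hBev
          have hqσ : q s₀ * (τ N * σ s₀) ≤ Mq * (τ N * σ s₀) :=
            mul_le_mul_of_nonneg_right hqub (mul_pos hτN hσ₀).le
          have hmem : μhat N ω s₀ < c s₀ - q s₀ * τ N * σ s₀ := by nlinarith
          have := hω hmem
          simp only [Set.mem_setOf_eq] at this
          linarith
        calc f N ≤ outerProb P Bᶜ := outerProb_mono P hsub
          _ = 1 - innerProb P B := outerProb_compl P B
          _ ≤ ε := by linarith
      · obtain ⟨M, hM, hlim⟩ := hZtight (ε/2) (by linarith)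
        have hev1 : ∀ᶠ N in atTop, 1 - ε <
            innerProb P {ω : Ω | ∀ s, Z N ω s / τ N ≥ -M} :=
          eventually_lt_of_lt_liminf (lt_of_lt_of_le (by linarith) hlim) (hcobdd _)
        have hev2 : ∀ᶠ N in atTop, τ N * (M + Mq) < K := hτC _ _ hK
        refine limsup_le_of_le hcob ?_
        filter_upwards [hev1, hev2] with N h1 h2
        set B : Set Ω := {ω : Ω | ∀ s, Z N ω s / τ N ≥ -M} with hB
        have hτN : 0 < τ N := hτpos N
        have hmc : μ s₀ - c s₀ < 0 := by linarith
        have hsub : {ω : Ω |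
            {s | μhat N ω s < c s - q s * τ N * σ s} ⊆ {s | μ s < b s}} ⊆ Bᶜ := by
          intro ω hω
          simp only [Set.mem_compl_iff, hB, Set.mem_setOf_eq]
          intro hBev
          have h5 := hfarineq ω N s₀ hcase
          rw [Real.sign_of_neg hmc] at h5
          have h6 : -M * τ N ≤ Z N ω s₀ := by
            have h7 := hBev s₀
            rw [ge_iff_le, le_div_iff₀ hτN] at h7
            exact h7
          have hmem : μhat N ω s₀ < c s₀ - q s₀ * τ N * σ s₀ := by
            nlinarith [mul_le_mul_of_nonneg_left h6 hσ₀.le,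
              mul_le_mul_of_nonneg_right hqub (mul_pos hτN hσ₀).le,
              mul_lt_mul_of_pos_left h2 hσ₀]
          have := hω hmem
          simp only [Set.mem_setOf_eq] at this
          linarith
        calc f N ≤ outerProb P Bᶜ := outerProb_mono P hsub
          _ = 1 - innerProb P B := outerProb_compl P B
          _ ≤ ε := by linarith
    have hlow : (0:ℝ) ≤ limsup f atTop :=
      le_limsup_of_frequently_le (Frequently.of_forall hf0) hbd
    linarith [hup, hlow]
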